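/- arXiv:2008.01238 — 10 statements merged into one kernel-verified Lean document; each statement's English description precedes it below -/
import Mathlib

section
/- For every integer K ≥ 1, integer M with 1 ≤ M < K, and α ∈ [0,1], a nonnegative tuple d = (d_1,…,d_K) ∈ ℝ^K satisfies the all-subsets outer-bound description — namely, for every nonempty subset U ⊆ {1,…,K}, ∑_{k∈U} d_k ≤ 1 + α·max(|U ∩ K_α| − 1, 0) — if and only if d lies in the DoF polyhedron D, i.e., for every nonempty subset S ⊆ K_α, ∑_{k∈S} d_k + ∑_{k∈K_0} d_k ≤ 1 + (|S|−1)α. (This is the claim in the converse of Theorem 1 that, after removing the redundant inequalities, the outer bound coincides with the region D.) -/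
/-!
Write `U = S ∪ T` with `S ⊆ K_α` and `T ⊆ K_0`. Since `d ≥ 0` and the outer bound for `U` depends
only on `S`, the strongest outer-bound inequality with a given nonempty `S` is the one with
`T = K_0`, and that is exactly the inequality of `D` for `S`. When `S = ∅` the outer bound is `1`,
and `∑_{K_0} d ≤ 1` follows from the inequality of `D` for any singleton.
-/

open Finset

namespace OuterBound

lemma max_card_sub_one_zero_eq {β : Type*} {S : Finset β} (hS : S.Nonempty) :
    max ((S.card : ℝ) - 1) 0 = S.card - 1 :=
  max_eq_left (sub_nonneg.mpr (by exact_mod_cast hS.card_pos))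

variable {ι : Type*} [Fintype ι] {p : ι → Prop} [DecidablePred p] {d : ι → ℝ} {α : ℝ}

lemma filter_union_filter_not [DecidableEq ι] {S : Finset ι} (hS : ∀ i ∈ S, p i) :
    (S ∪ univ.filter (fun i => ¬ p i)).filter p = S := by
  ext i
  simp only [mem_filter, mem_union, mem_univ, true_and]
  exact ⟨fun hi => hi.1.resolve_right (not_not_intro hi.2), fun hi => ⟨Or.inl hi, hS i hi⟩⟩

lemma sum_le_sum_filter_add_sum_filter_not (hd : ∀ i, 0 ≤ d i) (U : Finset ι) :
    ∑ i ∈ U, d i ≤ ∑ i ∈ U.filter p, d i + ∑ i ∈ univ.filter (fun i => ¬ p i), d i := by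
  rw [← sum_filter_add_sum_filter_not U p d]
  exact add_le_add_right
    (sum_le_sum_of_subset_of_nonneg (filter_subset_filter _ (subset_univ U)) fun i _ _ => hd i) _

lemma sum_add_sum_filter_not_le_of_outer_bound
    (h : ∀ U : Finset ι, U.Nonempty →
      ∑ i ∈ U, d i ≤ 1 + α * max (((U.filter p).card : ℝ) - 1) 0)
    {S : Finset ι} (hS : S.Nonempty) (hSp : ∀ i ∈ S, p i) :
    ∑ i ∈ S, d i + ∑ i ∈ univ.filter (fun i => ¬ p i), d i ≤ 1 + ((S.card : ℝ) - 1) * α := by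
  classical
  have hdisj : Disjoint S (univ.filter fun i => ¬ p i) :=
    disjoint_left.mpr fun i hi hi' => (mem_filter.mp hi').2 (hSp i hi)
  have hU := h (S ∪ univ.filter fun i => ¬ p i) (hS.mono subset_union_left)
  rw [filter_union_filter_not hSp, sum_union hdisj, max_card_sub_one_zero_eq hS] at hU
  linarith

lemma sum_filter_not_le_one (hd : ∀ i, 0 ≤ d i) {i₀ : ι} (hi₀ : p i₀)
    (h : ∀ S : Finset ι, S.Nonempty → (∀ i ∈ S, p i) →
      ∑ i ∈ S, d i + ∑ i ∈ univ.filter (fun i => ¬ p i), d i ≤ 1 + ((S.card : ℝ) - 1) * α) :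
    ∑ i ∈ univ.filter (fun i => ¬ p i), d i ≤ 1 := by
  have h₀ := h {i₀} (singleton_nonempty i₀) (by simpa using hi₀)
  rw [sum_singleton, card_singleton, Nat.cast_one, sub_self, zero_mul] at h₀
  linarith [hd i₀]

lemma sum_le_outer_bound (hd : ∀ i, 0 ≤ d i) (hp : ∃ i, p i)
    (h : ∀ S : Finset ι, S.Nonempty → (∀ i ∈ S, p i) →
      ∑ i ∈ S, d i + ∑ i ∈ univ.filter (fun i => ¬ p i), d i ≤ 1 + ((S.card : ℝ) - 1) * α)
    (U : Finset ι) :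
    ∑ i ∈ U, d i ≤ 1 + α * max (((U.filter p).card : ℝ) - 1) 0 := by
  have hsplit := sum_le_sum_filter_add_sum_filter_not (p := p) hd U
  rcases (U.filter p).eq_empty_or_nonempty with hS | hS
  · obtain ⟨i₀, hi₀⟩ := hp
    have hK₀ := sum_filter_not_le_one hd hi₀ h
    rw [hS, sum_empty] at hsplit
    rw [hS, card_empty, Nat.cast_zero, zero_sub, max_eq_right (by norm_num), mul_zero]
    linarith
  · have hDS := h _ hS (fun i hi => (mem_filter.mp hi).2)
    rw [max_card_sub_one_zero_eq hS]
    linarith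

theorem outer_bound_iff (hd : ∀ i, 0 ≤ d i) (hp : ∃ i, p i) :
    (∀ U : Finset ι, U.Nonempty →
      ∑ i ∈ U, d i ≤ 1 + α * max (((U.filter p).card : ℝ) - 1) 0) ↔
    (∀ S : Finset ι, S.Nonempty → (∀ i ∈ S, p i) →
      ∑ i ∈ S, d i + ∑ i ∈ univ.filter (fun i => ¬ p i), d i ≤ 1 + ((S.card : ℝ) - 1) * α) :=
  ⟨fun h _ hS hSp => sum_add_sum_filter_not_le_of_outer_bound h hS hSp,
    fun h U _ => sum_le_outer_bound hd hp h U⟩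

end OuterBound

theorem outer_bound_coincides_with_D_general (K M : ℕ) (hK : 1 ≤ K) (hM : 1 ≤ M)
    (α : ℝ)
    (d : Fin K → ℝ) (hd : ∀ k, 0 ≤ d k) :
    (∀ U : Finset (Fin K), U.Nonempty →
      ∑ k ∈ U, d k ≤ 1 + α * max (((Finset.filter (fun k : Fin K => (k : ℕ) < M) U).card : ℝ) - 1) 0) ↔
    (∀ S : Finset (Fin K), S.Nonempty → (∀ k ∈ S, (k : ℕ) < M) →
      ∑ k ∈ S, d k + ∑ k ∈ Finset.univ.filter (fun k : Fin K => M ≤ (k : ℕ)), d k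
        ≤ 1 + ((S.card : ℝ) - 1) * α) := by
  simpa only [not_lt] using
    OuterBound.outer_bound_iff (p := fun k : Fin K => (k : ℕ) < M) hd ⟨⟨0, hK⟩, hM⟩

/-- For every integer `K ≥ 1`, integer `M` with `1 ≤ M < K`, and `α ∈ [0,1]`, a nonnegative
tuple `d ∈ ℝ^K` satisfies the all-subsets outer-bound description (for every nonempty
`U ⊆ {1,…,K}`, `∑_{k∈U} d_k ≤ 1 + α·max(|U ∩ K_α| − 1, 0)`) if and only if `d` lies in the
DoF polyhedron `D`: for every nonempty `S ⊆ K_α`,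
`∑_{k∈S} d_k + ∑_{k∈K_0} d_k ≤ 1 + (|S|−1)α`. Here `K_α` is the set of the first `M` indices
and `K_0` the remaining `K − M` indices. -/
theorem outer_bound_coincides_with_D (K M : ℕ) (hK : 1 ≤ K) (hM : 1 ≤ M) (hMK : M < K)
    (α : ℝ) (hα0 : 0 ≤ α) (hα1 : α ≤ 1)
    (d : Fin K → ℝ) (hd : ∀ k, 0 ≤ d k) :
    (∀ U : Finset (Fin K), U.Nonempty →
      ∑ k ∈ U, d k ≤ 1 + α * max (((Finset.filter (fun k : Fin K => (k : ℕ) < M) U).card : ℝ) - 1) 0) ↔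
    (∀ S : Finset (Fin K), S.Nonempty → (∀ k ∈ S, (k : ℕ) < M) →
      ∑ k ∈ S, d k + ∑ k ∈ Finset.univ.filter (fun k : Fin K => M ≤ (k : ℕ)), d k
        ≤ 1 + ((S.card : ℝ) - 1) * α) :=
  outer_bound_coincides_with_D_general K M hK hM α d hd
end

section
/- Let M ≥ 1 be an integer, α ∈ [0,1], and let S ⊆ K_α = {1,…,M} be a subset with |S| ≥ 2. For nonnegative reals d_1,…,d_M and d_Σ ≥ 0, the following two conditions are equivalent: (i) ∑_{i∈S} d_i + d_Σ = 1 + (|S|−1)α and, for every nonempty subset S̄ ⊆ K_α, ∑_{i∈S̄} d_i + d_Σ ≤ 1 + (|S̄|−1)α; (ii) ∑_{i∈S} d_i + d_Σ = 1 + (|S|−1)α, d_i ≥ α for all i ∈ S, and d_i ≤ α for all i ∈ K_α \ S. (This is the facet characterization used in the achievability proof of Theorem 1.) -/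
open Finset

/-! Subtracting `α` from every `d i` turns the constraint for `S'` into `∑_{i ∈ S'} (d i - α) ≤ 1 - α - d_Σ`,
so (i) says that `S` maximises `T ↦ ∑_{i ∈ T} (d i - α)` over nonempty `T`. A set maximises such a sum
exactly when it contains every positive term and no negative one; removing a point of `S` keeps the
set nonempty because `|S| ≥ 2`. -/

section MaxSubsetSum

variable {ι : Type*} [DecidableEq ι] {S : Finset ι} {e : ι → ℝ}

theorem sum_le_sum_of_nonneg_of_nonpos (hpos : ∀ i ∈ S, 0 ≤ e i) (hneg : ∀ i ∉ S, e i ≤ 0)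
    (T : Finset ι) : ∑ i ∈ T, e i ≤ ∑ i ∈ S, e i :=
  calc ∑ i ∈ T, e i = ∑ i ∈ T ∩ S, e i + ∑ i ∈ T \ S, e i := (sum_inter_add_sum_sdiff T S e).symm
    _ ≤ ∑ i ∈ T ∩ S, e i + 0 := by
      gcongr
      exact sum_nonpos fun i hi => hneg i (mem_sdiff.mp hi).2
    _ ≤ ∑ i ∈ S, e i := by
      rw [add_zero]
      exact sum_le_sum_of_subset_of_nonneg inter_subset_right fun i hi _ => hpos i hi

theorem nonneg_of_forall_sum_le (hS : S.Nontrivial)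
    (hmax : ∀ T : Finset ι, T.Nonempty → ∑ i ∈ T, e i ≤ ∑ i ∈ S, e i) {i : ι} (hi : i ∈ S) :
    0 ≤ e i := by
  have h := hmax (S.erase i) (hS.erase_nonempty)
  rw [← sum_erase_add S e hi] at h
  linarith

theorem nonpos_of_forall_sum_le (hmax : ∀ T : Finset ι, T.Nonempty → ∑ i ∈ T, e i ≤ ∑ i ∈ S, e i)
    {i : ι} (hi : i ∉ S) : e i ≤ 0 := by
  have h := hmax (insert i S) (insert_nonempty i S)
  rw [sum_insert hi] at h
  linarith

theorem forall_sum_le_iff (hS : S.Nontrivial) :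
    (∀ T : Finset ι, T.Nonempty → ∑ i ∈ T, e i ≤ ∑ i ∈ S, e i) ↔
      (∀ i ∈ S, 0 ≤ e i) ∧ ∀ i ∉ S, e i ≤ 0 :=
  ⟨fun hmax => ⟨fun _ => nonneg_of_forall_sum_le hS hmax, fun _ => nonpos_of_forall_sum_le hmax⟩,
    fun ⟨hpos, hneg⟩ T _ => sum_le_sum_of_nonneg_of_nonpos hpos hneg T⟩

end MaxSubsetSum

section Normalize

variable {ι : Type*} (T : Finset ι) (d : ι → ℝ) (α c : ℝ)

theorem sum_add_sub_one_add_card_mul :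
    ∑ i ∈ T, d i + c - (1 + ((T.card : ℝ) - 1) * α) = ∑ i ∈ T, (d i - α) - (1 - α - c) := by
  rw [sum_sub_distrib, sum_const, nsmul_eq_mul]
  ring

theorem sum_add_eq_one_add_card_mul_iff :
    ∑ i ∈ T, d i + c = 1 + ((T.card : ℝ) - 1) * α ↔ ∑ i ∈ T, (d i - α) = 1 - α - c := by
  rw [← sub_eq_zero, sum_add_sub_one_add_card_mul, sub_eq_zero]

theorem sum_add_le_one_add_card_mul_iff :
    ∑ i ∈ T, d i + c ≤ 1 + ((T.card : ℝ) - 1) * α ↔ ∑ i ∈ T, (d i - α) ≤ 1 - α - c := by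
  rw [← sub_nonpos, sum_add_sub_one_add_card_mul, sub_nonpos]

end Normalize

theorem facet_characterization_general (M : ℕ) (α : ℝ)
    (S : Finset (Fin M)) (hS : 2 ≤ S.card)
    (d : Fin M → ℝ) (dSigma : ℝ) :
    ((∑ i ∈ S, d i + dSigma = 1 + ((S.card : ℝ) - 1) * α) ∧
      (∀ S' : Finset (Fin M), S'.Nonempty →
        ∑ i ∈ S', d i + dSigma ≤ 1 + ((S'.card : ℝ) - 1) * α)) ↔
    ((∑ i ∈ S, d i + dSigma = 1 + ((S.card : ℝ) - 1) * α) ∧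
      (∀ i ∈ S, α ≤ d i) ∧ (∀ i, i ∉ S → d i ≤ α)) := by
  have hS' : S.Nontrivial := one_lt_card_iff_nontrivial.mp hS
  refine and_congr_right fun heq => ?_
  simp only [sum_add_le_one_add_card_mul_iff, ← (sum_add_eq_one_add_card_mul_iff ..).mp heq]
  simpa only [sub_nonneg, sub_nonpos] using forall_sum_le_iff (e := fun i => d i - α) hS'

/-- Facet characterization used in the achievability proof of Theorem 1. Let `M ≥ 1`,
`α ∈ [0,1]`, and `S ⊆ K_α = {1,…,M}` with `|S| ≥ 2`. For nonnegative reals `d_1,…,d_M`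
and `d_Σ ≥ 0`, the following are equivalent:
(i) `∑_{i∈S} d_i + d_Σ = 1 + (|S|−1)α` and for every nonempty `S̄ ⊆ K_α`,
    `∑_{i∈S̄} d_i + d_Σ ≤ 1 + (|S̄|−1)α`;
(ii) `∑_{i∈S} d_i + d_Σ = 1 + (|S|−1)α`, `d_i ≥ α` for all `i ∈ S`, and `d_i ≤ α` for all
    `i ∈ K_α \ S`. -/
theorem facet_characterization (M : ℕ) (hM : 1 ≤ M) (α : ℝ) (hα0 : 0 ≤ α) (hα1 : α ≤ 1)
    (S : Finset (Fin M)) (hS : 2 ≤ S.card)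
    (d : Fin M → ℝ) (hd : ∀ i, 0 ≤ d i) (dSigma : ℝ) (hdSigma : 0 ≤ dSigma) :
    ((∑ i ∈ S, d i + dSigma = 1 + ((S.card : ℝ) - 1) * α) ∧
      (∀ S' : Finset (Fin M), S'.Nonempty →
        ∑ i ∈ S', d i + dSigma ≤ 1 + ((S'.card : ℝ) - 1) * α)) ↔
    ((∑ i ∈ S, d i + dSigma = 1 + ((S.card : ℝ) - 1) * α) ∧
      (∀ i ∈ S, α ≤ d i) ∧ (∀ i, i ∉ S → d i ≤ α)) :=
  facet_characterization_general M α S hS d dSigma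
end

section
/- Let M and K be integers with 1 ≤ M < K and let α ∈ [0,1]. The maximum of the sum ∑_{k=1}^K d_k over all d in the DoF polyhedron D equals 1 + (M−1)α, and it is attained at the point d* defined by d*_k = α for k ∈ K_α, d*_{M+1} = 1−α, and d*_k = 0 for k ∈ K_0 \ {M+1}; in particular, when α < 1 the sum-DoF optimum is attained at a point of D giving strictly positive DoF to a statistical-CSIT user. -/
/-- Membership in the DoF polyhedron `D` of the overloaded MISO BC: `d_k ≥ 0` for all `k`,
and for every nonempty `S ⊆ K_α = {1,…,M}` (indices `k` with `(k:ℕ) < M`),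
`∑_{k∈S} d_k + ∑_{k∈K_0} d_k ≤ 1 + (|S|−1)α`, where `K_0 = {M+1,…,K}` is the set of indices
`k` with `M ≤ (k:ℕ)`. -/
def memD (K M : ℕ) (α : ℝ) (d : Fin K → ℝ) : Prop :=
  (∀ k, 0 ≤ d k) ∧
  ∀ S : Finset (Fin K), S.Nonempty → (∀ k ∈ S, (k : ℕ) < M) →
    ∑ k ∈ S, d k + ∑ k ∈ Finset.univ.filter (fun k : Fin K => M ≤ (k : ℕ)), d k
      ≤ 1 + ((S.card : ℝ) - 1) * α

/-!
The constraint for `S = K_α` bounds the sum of all `d_k` by `1 + (M − 1)α`. The point `d*` meets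
every constraint with equality, since `∑_{k∈S} d*_k + ∑_{k∈K_0} d*_k = |S|α + (1 − α)`, and its
total is exactly `1 + (M − 1)α`.
-/

open Finset

namespace SumDoF

variable {K M : ℕ} {α : ℝ}

def dStar (M : ℕ) (α : ℝ) (k : Fin K) : ℝ :=
  if (k : ℕ) < M then α else if (k : ℕ) = M then 1 - α else 0

theorem dStar_of_lt {k : Fin K} (hk : (k : ℕ) < M) : dStar M α k = α :=
  if_pos hk

theorem sum_eq_sum_partial_add_sum_stat (d : Fin K → ℝ) :
    ∑ k, d k = ∑ k ∈ univ.filter (fun k : Fin K => (k : ℕ) < M), d k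
      + ∑ k ∈ univ.filter (fun k : Fin K => M ≤ (k : ℕ)), d k := by
  simp_rw [← not_lt]
  exact (sum_filter_add_sum_filter_not univ _ d).symm

theorem sum_le_of_memD (hM : 1 ≤ M) (hMK : M ≤ K) {d : Fin K → ℝ} (hd : memD K M α d) :
    ∑ k, d k ≤ 1 + ((M : ℝ) - 1) * α := by
  have hpartial_ne : (univ.filter fun k : Fin K => (k : ℕ) < M).Nonempty :=
    ⟨⟨0, by omega⟩, mem_filter.2 ⟨mem_univ _, hM⟩⟩
  have hbound := hd.2 _ hpartial_ne fun k hk => (mem_filter.1 hk).2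
  rwa [Fin.card_filter_val_lt, min_eq_right hMK, ← sum_eq_sum_partial_add_sum_stat] at hbound

theorem sum_dStar_of_forall_lt {S : Finset (Fin K)} (hS : ∀ k ∈ S, (k : ℕ) < M) :
    ∑ k ∈ S, dStar M α k = S.card * α := by
  rw [sum_congr rfl fun k hk => dStar_of_lt (hS k hk), sum_const, nsmul_eq_mul]

theorem sum_dStar_stat (hMK : M < K) :
    ∑ k ∈ univ.filter (fun k : Fin K => M ≤ (k : ℕ)), dStar M α k = 1 - α := by
  have hsingle : ∀ k ∈ univ.filter (fun k : Fin K => M ≤ (k : ℕ)),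
      dStar M α k = if k = ⟨M, hMK⟩ then 1 - α else 0 := by
    intro k hk
    simp [dStar, not_lt.2 (mem_filter.1 hk).2, Fin.ext_iff]
  rw [sum_congr rfl hsingle, sum_ite_eq']
  simp

theorem memD_dStar (hMK : M < K) (hα0 : 0 ≤ α) (hα1 : α ≤ 1) : memD K M α (dStar M α) := by
  refine ⟨fun k => ?_, fun S _ hS => ?_⟩
  · unfold dStar
    split_ifs <;> linarith
  · rw [sum_dStar_of_forall_lt hS, sum_dStar_stat hMK]
    linarith

theorem sum_dStar (hMK : M < K) : ∑ k : Fin K, dStar M α k = 1 + ((M : ℝ) - 1) * α := by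
  rw [sum_eq_sum_partial_add_sum_stat, sum_dStar_stat hMK,
    sum_dStar_of_forall_lt fun k hk => (mem_filter.1 hk).2, Fin.card_filter_val_lt,
    min_eq_right hMK.le]
  ring

theorem dStar_stat_pos (hMK : M < K) (hα1 : α < 1) : 0 < dStar M α (⟨M, hMK⟩ : Fin K) := by
  simp [dStar, hα1]

end SumDoF

open SumDoF in
/-- The maximum of `∑_k d_k` over the DoF polyhedron `D` equals `1 + (M−1)α`, attained at the
point `d*` with `d*_k = α` for `k ∈ K_α`, `d*_{M+1} = 1 − α` and `d*_k = 0` for the remaining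
statistical-CSIT users; in particular, when `α < 1` the sum-DoF optimum is attained at a point
of `D` giving strictly positive DoF to a statistical-CSIT user. -/
theorem sum_dof_optimum (K M : ℕ) (hM : 1 ≤ M) (hMK : M < K)
    (α : ℝ) (hα0 : 0 ≤ α) (hα1 : α ≤ 1) :
    IsGreatest {s : ℝ | ∃ d : Fin K → ℝ, memD K M α d ∧ s = ∑ k, d k}
      (1 + ((M : ℝ) - 1) * α) ∧
    memD K M α (fun k => if (k : ℕ) < M then α else if (k : ℕ) = M then 1 - α else 0) ∧
    (∑ k : Fin K, (if (k : ℕ) < M then α else if (k : ℕ) = M then 1 - α else 0))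
      = 1 + ((M : ℝ) - 1) * α ∧
    (α < 1 → ∃ k : Fin K, M ≤ (k : ℕ) ∧
      0 < (if (k : ℕ) < M then α else if (k : ℕ) = M then 1 - α else 0)) := by
  have hmem : memD K M α (dStar M α) := memD_dStar hMK hα0 hα1
  have htotal : ∑ k, dStar M α k = 1 + ((M : ℝ) - 1) * α := sum_dStar hMK
  refine ⟨⟨⟨dStar M α, hmem, htotal.symm⟩, ?_⟩, hmem, htotal, ?_⟩
  · rintro s ⟨d, hd, rfl⟩
    exact sum_le_of_memD hM hMK.le hd
  · exact fun hlt => ⟨⟨M, hMK⟩, le_rfl, dStar_stat_pos hMK hlt⟩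
end

section
/- Let M and K be integers with 1 ≤ M < K, and let α, β ∈ [0,1]. The symmetric PP–RSMA DoF tuple d^PP ∈ ℝ^K defined by d^PP_k = (β + (M−1)·min{α,β})/M for k ∈ K_α and d^PP_k = (1−β)/(K−M) for k ∈ K_0 lies in the DoF polyhedron D; that is, d^PP_k ≥ 0 for all k and, for every nonempty S ⊆ K_α, |S|·(β + (M−1)·min{α,β})/M + (1−β) ≤ 1 + (|S|−1)α. -/
open Finset

/-- With `m := min α β ≤ β`, the slack `M·(β + (s−1)α) − s·(β + (M−1)m)` is at least
`M(s−1)(α − m) ≥ 0`. -/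
lemma pp_rsma_card_constraint (s M α β : ℝ) (hs : 1 ≤ s) (hsM : s ≤ M) :
    s * ((β + (M - 1) * min α β) / M) + (1 - β) ≤ 1 + (s - 1) * α := by
  have hM : 0 < M := by linarith
  have hmα : min α β ≤ α := min_le_left α β
  have hmβ : min α β ≤ β := min_le_right α β
  have key : s * (β + (M - 1) * min α β) ≤ M * (β + (s - 1) * α) := by
    nlinarith [mul_nonneg (sub_nonneg.2 hsM) (sub_nonneg.2 hmβ),
      mul_nonneg (mul_nonneg hM.le (sub_nonneg.2 hs)) (sub_nonneg.2 hmα)]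
  have key_div : s * ((β + (M - 1) * min α β) / M) ≤ β + (s - 1) * α := by
    rw [← mul_div_assoc, div_le_iff₀ hM]
    linarith
  linarith

namespace Fin

lemma card_filter_le_val {K M : ℕ} (hMK : M ≤ K) :
    #{k : Fin K | M ≤ (k : ℕ)} = K - M := by
  have h := card_filter_add_card_filter_not (s := univ) (p := fun k : Fin K => (k : ℕ) < M)
  simp only [card_filter_val_lt, not_lt, card_univ, Fintype.card_fin] at h
  omega

lemma card_le_of_forall_val_lt {K M : ℕ} {S : Finset (Fin K)} (hS : ∀ k ∈ S, (k : ℕ) < M) :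
    #S ≤ M := by
  calc #S ≤ #{k : Fin K | (k : ℕ) < M} := card_le_card fun k hk => by simpa using hS k hk
    _ = min K M := card_filter_val_lt
    _ ≤ M := min_le_right K M

end Fin

lemma memD_ite_of_forall_card {K M : ℕ} (hMK : M ≤ K) {α a b : ℝ} (ha : 0 ≤ a) (hb : 0 ≤ b)
    (h : ∀ s : ℕ, 1 ≤ s → s ≤ M → (s : ℝ) * a + ((K : ℝ) - M) * b ≤ 1 + ((s : ℝ) - 1) * α) :
    memD K M α (fun k => if (k : ℕ) < M then a else b) := by
  refine ⟨fun k => by dsimp only; split_ifs <;> assumption, fun S hS hSM => ?_⟩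
  have sum_S : ∑ k ∈ S, (if (k : ℕ) < M then a else b) = #S * a := by
    rw [sum_congr rfl fun k hk => if_pos (hSM k hk), sum_const, nsmul_eq_mul]
  have sum_K₀ : ∑ k ∈ univ.filter (fun k : Fin K => M ≤ (k : ℕ)),
      (if (k : ℕ) < M then a else b) = ((K : ℝ) - M) * b := by
    rw [sum_congr rfl fun k hk => if_neg (not_lt.2 (mem_filter.1 hk).2), sum_const,
      nsmul_eq_mul, Fin.card_filter_le_val hMK, Nat.cast_sub hMK]
  rw [sum_S, sum_K₀]
  exact h #S hS.card_pos (Fin.card_le_of_forall_val_lt hSM)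

theorem pp_rsma_dof_achievable_general (K M : ℕ) (hM : 1 ≤ M) (hMK : M < K)
    (α β : ℝ) (hα0 : 0 ≤ α) (hβ0 : 0 ≤ β) (hβ1 : β ≤ 1) :
    memD K M α (fun k =>
      if (k : ℕ) < M then (β + ((M : ℝ) - 1) * min α β) / M
      else (1 - β) / ((K : ℝ) - M)) ∧
    (∀ s : ℕ, 1 ≤ s → s ≤ M →
      (s : ℝ) * ((β + ((M : ℝ) - 1) * min α β) / M) + (1 - β) ≤ 1 + ((s : ℝ) - 1) * α) := by
  have hM' : (1 : ℝ) ≤ M := by exact_mod_cast hM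
  have hKM : (0 : ℝ) < (K : ℝ) - M := sub_pos.2 (by exact_mod_cast hMK)
  have size_bound (s : ℕ) (hs : 1 ≤ s) (hsM : s ≤ M) :
      (s : ℝ) * ((β + ((M : ℝ) - 1) * min α β) / M) + (1 - β) ≤ 1 + ((s : ℝ) - 1) * α :=
    pp_rsma_card_constraint s M α β (by exact_mod_cast hs) (by exact_mod_cast hsM)
  refine ⟨memD_ite_of_forall_card hMK.le ?_ ?_ ?_, size_bound⟩
  · have hmin : 0 ≤ min α β := le_min hα0 hβ0
    have hM1 : (0 : ℝ) ≤ M - 1 := by linarith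
    positivity
  · exact div_nonneg (sub_nonneg.2 hβ1) hKM.le
  · intro s hs hsM
    rw [mul_div_cancel₀ _ hKM.ne']
    exact size_bound s hs hsM

/-- The symmetric PP–RSMA DoF tuple `d^PP`, with `d^PP_k = (β + (M−1)·min{α,β})/M` for the
partial-CSIT users `k ∈ K_α` and `d^PP_k = (1−β)/(K−M)` for the statistical-CSIT users
`k ∈ K_0`, lies in the DoF polyhedron `D`: all entries are nonnegative and, for every
nonempty `S ⊆ K_α`, `|S|·(β + (M−1)·min{α,β})/M + (1−β) ≤ 1 + (|S|−1)α`. -/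
theorem pp_rsma_dof_achievable (K M : ℕ) (hM : 1 ≤ M) (hMK : M < K)
    (α β : ℝ) (hα0 : 0 ≤ α) (hα1 : α ≤ 1) (hβ0 : 0 ≤ β) (hβ1 : β ≤ 1) :
    memD K M α (fun k =>
      if (k : ℕ) < M then (β + ((M : ℝ) - 1) * min α β) / M
      else (1 - β) / ((K : ℝ) - M)) ∧
    (∀ s : ℕ, 1 ≤ s → s ≤ M →
      (s : ℝ) * ((β + ((M : ℝ) - 1) * min α β) / M) + (1 - β) ≤ 1 + ((s : ℝ) - 1) * α) :=
  pp_rsma_dof_achievable_general K M hM hMK α β hα0 hβ0 hβ1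
end

section
/- Let M and K be integers with 1 ≤ M < K, and let α, θ ∈ [0,1]. The symmetric TP–RSMA DoF tuple d^TP ∈ ℝ^K defined by d^TP_k = θ·(1+(M−1)α)/M for k ∈ K_α and d^TP_k = (1−θ)/(K−M) for k ∈ K_0 lies in the DoF polyhedron D; that is, d^TP_k ≥ 0 for all k and, for every nonempty S ⊆ K_α, |S|·θ·(1+(M−1)α)/M + (1−θ) ≤ 1 + (|S|−1)α. -/
open Finset

theorem Fin.card_filter_le_val_s4 (n m : ℕ) : #{i : Fin n | m ≤ (i : ℕ)} = n - m := by
  have h := card_filter_add_card_filter_not (s := univ) fun i : Fin n => (i : ℕ) < m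
  simp only [not_lt, card_filter_val_lt, card_univ, Fintype.card_fin] at h
  omega

theorem Fin.card_le_of_forall_val_lt_s4 {n m : ℕ} {S : Finset (Fin n)} (hS : ∀ k ∈ S, (k : ℕ) < m) :
    #S ≤ m :=
  calc #S ≤ #{i : Fin n | (i : ℕ) < m} := card_le_card fun k hk => by simpa using hS k hk
    _ = min n m := Fin.card_filter_val_lt
    _ ≤ m := min_le_right n m

theorem mul_tp_dof_add_le {s M α θ : ℝ} (hs : 1 ≤ s) (hsM : s ≤ M) (hα0 : 0 ≤ α) (hα1 : α ≤ 1)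
    (hθ0 : 0 ≤ θ) (hθ1 : θ ≤ 1) :
    s * (θ * (1 + (M - 1) * α) / M) + (1 - θ) ≤ 1 + (s - 1) * α := by
  have hM : 0 < M := by linarith
  have slack : M * (1 + (s - 1) * α - (s * (θ * (1 + (M - 1) * α) / M) + (1 - θ))) =
      (1 - θ) * M * (s - 1) * α + θ * (M - s) * (1 - α) := by
    field_simp
    ring
  have hslack : 0 ≤ (1 - θ) * M * (s - 1) * α + θ * (M - s) * (1 - α) := by
    have := sub_nonneg.2 hs
    have := sub_nonneg.2 hsM
    have := sub_nonneg.2 hα1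
    have := sub_nonneg.2 hθ1
    positivity
  rw [← slack, mul_nonneg_iff_of_pos_left hM, sub_nonneg] at hslack
  exact hslack

theorem tp_rsma_dof_achievable_general (K M : ℕ) (hMK : M < K)
    (α θ : ℝ) (hα0 : 0 ≤ α) (hα1 : α ≤ 1) (hθ0 : 0 ≤ θ) (hθ1 : θ ≤ 1) :
    memD K M α (fun k =>
      if (k : ℕ) < M then θ * (1 + ((M : ℝ) - 1) * α) / M
      else (1 - θ) / ((K : ℝ) - M)) ∧
    (∀ s : ℕ, 1 ≤ s → s ≤ M →
      (s : ℝ) * (θ * (1 + ((M : ℝ) - 1) * α) / M) + (1 - θ) ≤ 1 + ((s : ℝ) - 1) * α) := by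
  have hKM : (0 : ℝ) < K - M := sub_pos.2 (by exact_mod_cast hMK)
  have face (s : ℕ) (hs : 1 ≤ s) (hsM : s ≤ M) :=
    mul_tp_dof_add_le (M := M) (s := s) (by exact_mod_cast hs) (by exact_mod_cast hsM)
      hα0 hα1 hθ0 hθ1
  refine ⟨⟨fun k => ?_, fun S hS hSM => ?_⟩, face⟩
  · dsimp only
    split_ifs with hk
    · have : (1 : ℝ) ≤ M := by exact_mod_cast Nat.one_le_of_lt hk
      have : 0 ≤ ((M : ℝ) - 1) * α := mul_nonneg (by linarith) hα0
      positivity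
    · exact div_nonneg (sub_nonneg.2 hθ1) hKM.le
  · have statistical : ∑ k ∈ univ.filter (fun k : Fin K => M ≤ (k : ℕ)),
        (if (k : ℕ) < M then θ * (1 + ((M : ℝ) - 1) * α) / M else (1 - θ) / ((K : ℝ) - M))
        = 1 - θ := by
      rw [sum_ite_of_false (fun k hk => not_lt.2 (mem_filter.1 hk).2), sum_const,
        Fin.card_filter_le_val_s4, nsmul_eq_mul, Nat.cast_sub hMK.le, mul_div_cancel₀ _ hKM.ne']
    rw [sum_ite_of_true hSM, sum_const, nsmul_eq_mul, statistical]
    exact face _ (card_pos.2 hS) (Fin.card_le_of_forall_val_lt_s4 hSM)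

/-- The symmetric TP–RSMA DoF tuple `d^TP`, with `d^TP_k = θ·(1+(M−1)α)/M` for the
partial-CSIT users `k ∈ K_α` and `d^TP_k = (1−θ)/(K−M)` for the statistical-CSIT users
`k ∈ K_0`, lies in the DoF polyhedron `D`: all entries are nonnegative and, for every
nonempty `S ⊆ K_α`, `|S|·θ·(1+(M−1)α)/M + (1−θ) ≤ 1 + (|S|−1)α`. -/
theorem tp_rsma_dof_achievable (K M : ℕ) (hM : 1 ≤ M) (hMK : M < K)
    (α θ : ℝ) (hα0 : 0 ≤ α) (hα1 : α ≤ 1) (hθ0 : 0 ≤ θ) (hθ1 : θ ≤ 1) :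
    memD K M α (fun k =>
      if (k : ℕ) < M then θ * (1 + ((M : ℝ) - 1) * α) / M
      else (1 - θ) / ((K : ℝ) - M)) ∧
    (∀ s : ℕ, 1 ≤ s → s ≤ M →
      (s : ℝ) * (θ * (1 + ((M : ℝ) - 1) * α) / M) + (1 - θ) ≤ 1 + ((s : ℝ) - 1) * α) :=
  tp_rsma_dof_achievable_general K M hMK α θ hα0 hα1 hθ0 hθ1
end

section
/- For every integer M ≥ 1 and all θ, α ∈ [0,1], the per-user symmetric DoF of PP–RSMA with power partitioning factor β = θ dominates that of TP–RSMA with time partitioning factor θ: (θ + (M−1)·min{θ,α})/M ≥ θ·(1 + (M−1)α)/M. -/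
theorem mul_le_min_of_le_one {R : Type*} [Semiring R] [LinearOrder R]
    [IsOrderedRing R] {a b : R} (ha0 : 0 ≤ a) (ha1 : a ≤ 1) (hb0 : 0 ≤ b) (hb1 : b ≤ 1) :
    a * b ≤ min a b :=
  le_min (mul_le_of_le_one_right ha0 hb1) (mul_le_of_le_one_left hb0 ha1)

/-- For every integer `M ≥ 1` and all `θ, α ∈ [0,1]`, the per-user symmetric DoF of PP–RSMA
with power partitioning factor `β = θ` dominates that of TP–RSMA with time partitioning
factor `θ`: `(θ + (M−1)·min{θ,α})/M ≥ θ·(1 + (M−1)α)/M`. -/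
theorem pp_dominates_tp (M : ℕ) (hM : 1 ≤ M) (θ α : ℝ)
    (hθ0 : 0 ≤ θ) (hθ1 : θ ≤ 1) (hα0 : 0 ≤ α) (hα1 : α ≤ 1) :
    θ * (1 + ((M : ℝ) - 1) * α) / M ≤ (θ + ((M : ℝ) - 1) * min θ α) / M := by
  have hM' : (0 : ℝ) ≤ (M : ℝ) - 1 := sub_nonneg.mpr (by exact_mod_cast hM)
  have hmin := mul_le_min_of_le_one hθ0 hθ1 hα0 hα1
  gcongr
  calc θ * (1 + ((M : ℝ) - 1) * α) = θ + ((M : ℝ) - 1) * (θ * α) := by ring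
    _ ≤ θ + ((M : ℝ) - 1) * min θ α := by gcongr
end

section
/- Let M and K be integers with 1 ≤ M < K and θ, α ∈ [0,1]. Define d^TP ∈ ℝ^K by d^TP_k = θ·(1+(M−1)α)/M for k ∈ {1,…,M} and d^TP_k = (1−θ)/(K−M) for k ∈ {M+1,…,K}, and d^PP ∈ ℝ^K by d^PP_k = (θ + (M−1)·min{α,θ})/M for k ∈ {1,…,M} and d^PP_k = (1−θ)/(K−M) for k ∈ {M+1,…,K}. Then ∑_{k=1}^K d^TP_k = 1 + θ(M−1)α, ∑_{k=1}^K d^PP_k = 1 + (M−1)·min{α,θ}, and ∑_{k=1}^K d^PP_k ≥ ∑_{k=1}^K d^TP_k. -/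
/-
Each sum splits into the `M` partial-CSIT users, who share a total of `a` equally, and the
`K - M` statistical-CSIT users, who share `b = 1 - θ` equally, so it equals `a + b`. The
comparison reduces to `θ α ≤ min α θ`, which holds because both factors lie in `[0, 1]`.
-/

/-- The symmetric TP–RSMA DoF tuple: `θ·(1+(M−1)α)/M` for the partial-CSIT users
(indices `k` with `(k:ℕ) < M`) and `(1−θ)/(K−M)` for the statistical-CSIT users. -/
noncomputable def dTP (K M : ℕ) (θ α : ℝ) (k : Fin K) : ℝ :=
  if (k : ℕ) < M then θ * (1 + ((M : ℝ) - 1) * α) / M else (1 - θ) / ((K : ℝ) - M)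

/-- The symmetric PP–RSMA DoF tuple with power partitioning factor `β = θ`:
`(θ + (M−1)·min{α,θ})/M` for the partial-CSIT users (indices `k` with `(k:ℕ) < M`) and
`(1−θ)/(K−M)` for the statistical-CSIT users. -/
noncomputable def dPP (K M : ℕ) (θ α : ℝ) (k : Fin K) : ℝ :=
  if (k : ℕ) < M then (θ + ((M : ℝ) - 1) * min α θ) / M else (1 - θ) / ((K : ℝ) - M)

open Finset

theorem Fin.sum_ite_val_lt {R : Type*} [AddCommMonoid R] (n m : ℕ) (a b : R) :
    ∑ i : Fin n, (if (i : ℕ) < m then a else b) = min n m • a + (n - m) • b := by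
  have hcompl : #{i : Fin n | ¬ (i : ℕ) < m} = n - m := by
    have := card_filter_add_card_filter_not (s := (univ : Finset (Fin n))) (fun i => (i : ℕ) < m)
    rw [card_filter_val_lt, card_univ, Fintype.card_fin] at this
    omega
  rw [sum_ite, Finset.sum_const, Finset.sum_const, card_filter_val_lt, hcompl]

theorem Fin.sum_ite_val_lt_div {n m : ℕ} (hm : 0 < m) (hmn : m < n) (a b : ℝ) :
    ∑ i : Fin n, (if (i : ℕ) < m then a / m else b / (n - m)) = a + b := by
  have hm' : (m : ℝ) ≠ 0 := by positivity
  have hnm : (n : ℝ) - m ≠ 0 := sub_ne_zero.mpr (by exact_mod_cast hmn.ne')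
  rw [Fin.sum_ite_val_lt, min_eq_right hmn.le, nsmul_eq_mul, nsmul_eq_mul, Nat.cast_sub hmn.le,
    mul_div_cancel₀ _ hm', mul_div_cancel₀ _ hnm]

/-- The sum-DoF of TP–RSMA equals `1 + θ(M−1)α`, the sum-DoF of PP–RSMA (with `β = θ`)
equals `1 + (M−1)·min{α,θ}`, and the latter dominates the former. -/
theorem sum_dof_tp_pp (K M : ℕ) (hM : 1 ≤ M) (hMK : M < K) (θ α : ℝ)
    (hθ0 : 0 ≤ θ) (hθ1 : θ ≤ 1) (hα0 : 0 ≤ α) (hα1 : α ≤ 1) :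
    (∑ k : Fin K, dTP K M θ α k = 1 + θ * ((M : ℝ) - 1) * α) ∧
    (∑ k : Fin K, dPP K M θ α k = 1 + ((M : ℝ) - 1) * min α θ) ∧
    (∑ k : Fin K, dTP K M θ α k ≤ ∑ k : Fin K, dPP K M θ α k) := by
  have hTP : ∑ k : Fin K, dTP K M θ α k = 1 + θ * ((M : ℝ) - 1) * α :=
    (Fin.sum_ite_val_lt_div hM hMK _ _).trans (by ring)
  have hPP : ∑ k : Fin K, dPP K M θ α k = 1 + ((M : ℝ) - 1) * min α θ :=
    (Fin.sum_ite_val_lt_div hM hMK _ _).trans (by ring)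
  have hM1 : (0 : ℝ) ≤ M - 1 := sub_nonneg.mpr (by exact_mod_cast hM)
  have hprod : θ * α ≤ min α θ :=
    le_min (mul_le_of_le_one_left hα0 hθ1) (mul_le_of_le_one_right hθ0 hα1)
  refine ⟨hTP, hPP, ?_⟩
  rw [hTP, hPP]
  linarith [mul_le_mul_of_nonneg_left hprod hM1]
end

section
/- Let α ∈ (0,1). The point A = (α, α, 1−α) belongs to the three-user DoF polyhedron D = {(d₁,d₂,d₃) ∈ ℝ³ : d₁,d₂,d₃ ≥ 0, d₁+d₃ ≤ 1, d₂+d₃ ≤ 1, d₁+d₂+d₃ ≤ 1+α}, but A does not belong to the time-partitioning region T = convexHull((D_RS × {0}) ∪ {(0,0,1)}). That is, the point A cannot be achieved through time partitioning. -/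
/-- The two-user rate-splitting DoF region
`D_RS = {(x,y) : 0 ≤ x ≤ 1, 0 ≤ y ≤ 1, x + y ≤ 1 + α}`. -/
def DRS (α : ℝ) : Set (ℝ × ℝ) :=
  {p | 0 ≤ p.1 ∧ p.1 ≤ 1 ∧ 0 ≤ p.2 ∧ p.2 ≤ 1 ∧ p.1 + p.2 ≤ 1 + α}

/-- The three-user DoF polyhedron `D` of Theorem 1 for `M = 2`, `K = 3`:
`{(d₁,d₂,d₃) : d₁,d₂,d₃ ≥ 0, d₁+d₃ ≤ 1, d₂+d₃ ≤ 1, d₁+d₂+d₃ ≤ 1+α}`. -/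
def Dreg (α : ℝ) : Set (ℝ × ℝ × ℝ) :=
  {d | 0 ≤ d.1 ∧ 0 ≤ d.2.1 ∧ 0 ≤ d.2.2 ∧ d.1 + d.2.2 ≤ 1 ∧ d.2.1 + d.2.2 ≤ 1 ∧
    d.1 + d.2.1 + d.2.2 ≤ 1 + α}

/-- The time-partitioning region `T = convexHull((D_RS × {0}) ∪ {(0,0,1)})`. -/
def Treg (α : ℝ) : Set (ℝ × ℝ × ℝ) :=
  convexHull ℝ (((fun p : ℝ × ℝ => (p.1, p.2, (0 : ℝ))) '' DRS α) ∪ {(0, 0, 1)})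

/-! The functional `d₁ + d₂ + (1 + α) d₃` is at most `1 + α` on every generator of `T`, hence on
`T`. At `A` it equals `1 + 2α - α²`, which exceeds `1 + α` exactly when `α ∈ (0,1)`. -/

def tpWeight (α : ℝ) (z : ℝ × ℝ × ℝ) : ℝ :=
  z.1 + z.2.1 + (1 + α) * z.2.2

lemma isLinearMap_tpWeight (α : ℝ) : IsLinearMap ℝ (tpWeight α) where
  map_add x y := by simp only [tpWeight, Prod.fst_add, Prod.snd_add]; ring
  map_smul c x := by simp only [tpWeight, Prod.smul_fst, Prod.smul_snd, smul_eq_mul]; ring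

lemma Treg_subset_tpWeight_le (α : ℝ) : Treg α ⊆ {z | tpWeight α z ≤ 1 + α} := by
  refine convexHull_min ?_ (convex_halfSpace_le (isLinearMap_tpWeight α) (1 + α))
  rintro _ (⟨p, ⟨-, -, -, -, hp⟩, rfl⟩ | rfl)
  · show p.1 + p.2 + (1 + α) * 0 ≤ 1 + α
    linarith
  · show 0 + 0 + (1 + α) * 1 ≤ 1 + α
    linarith

lemma pointA_mem_Dreg (α : ℝ) (hα0 : 0 ≤ α) (hα1 : α ≤ 1) : (α, α, 1 - α) ∈ Dreg α := by
  refine ⟨hα0, hα0, ?_, ?_, ?_, ?_⟩ <;> dsimp only <;> linarith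

lemma pointA_notMem_Treg (α : ℝ) (hα0 : 0 < α) (hα1 : α < 1) : (α, α, 1 - α) ∉ Treg α := by
  intro hA
  have hbound : α + α + (1 + α) * (1 - α) ≤ 1 + α := Treg_subset_tpWeight_le α hA
  nlinarith [mul_pos hα0 (sub_pos.2 hα1)]

/-- For `α ∈ (0,1)`, the point `A = (α, α, 1−α)` belongs to the three-user DoF polyhedron
`D` but not to the time-partitioning region `T`: `A` cannot be achieved through time
partitioning. -/
theorem point_A_in_D_not_in_T (α : ℝ) (hα0 : 0 < α) (hα1 : α < 1) :
    ((α, α, 1 - α) ∈ Dreg α) ∧ ((α, α, 1 - α) ∉ Treg α) :=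
  ⟨pointA_mem_Dreg α hα0.le hα1.le, pointA_notMem_Treg α hα0 hα1⟩
end

section
/- Let α ∈ (0,1). Every point (d₁,d₂,d₃) of the time-partitioning region T = convexHull((D_RS × {0}) ∪ {(0,0,1)}) with d₃ > 0 satisfies d₁ + d₂ + d₃ < 1 + α. That is, serving the statistical-CSIT user with non-zero DoF through time partitioning strictly decreases the sum-DoF below 1+α. -/
/-!
The linear functional `d₁ + d₂ + (1 + α) d₃` is at most `1 + α` on both generators of `T`,
hence on all of `T`. Since `d₁ + d₂ + d₃` falls short of this functional by `α d₃`, which is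
positive when `α > 0` and `d₃ > 0`, the sum-DoF is strictly below `1 + α`.
-/

theorem Treg_subset_halfSpace (α : ℝ) :
    Treg α ⊆ {d | d.1 + d.2.1 + (1 + α) * d.2.2 ≤ 1 + α} := by
  refine convexHull_min ?_ (convex_halfSpace_le ?_ _)
  · rintro _ (⟨p, hp, rfl⟩ | rfl)
    · simpa using hp.2.2.2.2
    · simp
  · constructor
    · intro x y
      simp only [Prod.fst_add, Prod.snd_add]
      ring
    · intro c x
      simp only [Prod.smul_fst, Prod.smul_snd, smul_eq_mul]
      ring

theorem tp_positive_d3_strict_sum_loss_general (α : ℝ) (hα0 : 0 < α) :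
    ∀ d : ℝ × ℝ × ℝ, d ∈ Treg α → 0 < d.2.2 → d.1 + d.2.1 + d.2.2 < 1 + α := by
  intro d hd hd3
  have hweighted : d.1 + d.2.1 + (1 + α) * d.2.2 ≤ 1 + α := Treg_subset_halfSpace α hd
  have hloss : 0 < α * d.2.2 := mul_pos hα0 hd3
  linarith

/-- For `α ∈ (0,1)`, every point of the time-partitioning region `T` that gives the
statistical-CSIT user a strictly positive DoF `d₃ > 0` has sum-DoF strictly below `1 + α`. -/
theorem tp_positive_d3_strict_sum_loss (α : ℝ) (hα0 : 0 < α) (hα1 : α < 1) :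
    ∀ d : ℝ × ℝ × ℝ, d ∈ Treg α → 0 < d.2.2 → d.1 + d.2.1 + d.2.2 < 1 + α :=
  tp_positive_d3_strict_sum_loss_general α hα0
end

section
/- (Rate–WMMSE relationship, Proposition 1.) Fix a ∈ ℂ and T ∈ ℝ with T > 0 and |a|² < T. Then the infimum over all weights w > 0 and equalizers g ∈ ℂ of the weighted MSE ξ(w,g) = w·(|g|²T − 2Re(g·a) + 1) − ln w equals 1 − R, where R = ln(1 + |a|²/(T − |a|²)); moreover this infimum is attained at g* = conj(a)/T and w* = T/(T − |a|²). -/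
/-!
Completing the square gives `ε(g) = T‖g − ā/T‖² + (T − ‖a‖²)/T`, so the MSE is minimised at
`g* = ā/T` with value `c = (T − ‖a‖²)/T`. For fixed MSE `c`, `w c − ln w ≥ 1 + ln c` with equality
at `w = 1/c`, and `1 + ln c = 1 − ln(1 + ‖a‖²/(T − ‖a‖²))`.
-/

open Real

lemma mse_eq_mul_norm_sub_sq_add (a g : ℂ) {T : ℝ} (hT : T ≠ 0) :
    ‖g‖ ^ 2 * T - 2 * (g * a).re + 1
      = T * ‖g - starRingEnd ℂ a / T‖ ^ 2 + (T - ‖a‖ ^ 2) / T := by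
  simp only [Complex.sq_norm, Complex.normSq_apply, Complex.sub_re, Complex.sub_im,
    Complex.div_ofReal_re, Complex.div_ofReal_im, Complex.conj_re, Complex.conj_im,
    Complex.mul_re]
  field_simp
  ring

lemma sub_sq_norm_div_le_mse (a g : ℂ) {T : ℝ} (hT : 0 < T) :
    (T - ‖a‖ ^ 2) / T ≤ ‖g‖ ^ 2 * T - 2 * (g * a).re + 1 := by
  rw [mse_eq_mul_norm_sub_sq_add a g hT.ne']
  have := mul_nonneg hT.le (sq_nonneg ‖g - starRingEnd ℂ a / T‖)
  linarith

lemma mse_conj_div (a : ℂ) {T : ℝ} (hT : T ≠ 0) :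
    ‖starRingEnd ℂ a / T‖ ^ 2 * T - 2 * (starRingEnd ℂ a / T * a).re + 1
      = (T - ‖a‖ ^ 2) / T := by
  rw [mse_eq_mul_norm_sub_sq_add _ _ hT, sub_self, norm_zero]
  ring

/-- `log x ≤ x - 1` at `x = w c`. -/
lemma one_add_log_le_mul_sub_log {c w : ℝ} (hc : 0 < c) (hw : 0 < w) :
    1 + log c ≤ w * c - log w := by
  have := log_le_sub_one_of_pos (mul_pos hw hc)
  rw [log_mul hw.ne' hc.ne'] at this
  linarith

/-- Rate–WMMSE relationship (Proposition 1). Fix `a ∈ ℂ` and `T ∈ ℝ` with `T > 0` and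
`|a|² < T`. The infimum over all weights `w > 0` and equalizers `g ∈ ℂ` of the weighted MSE
`ξ(w,g) = w·(|g|²T − 2·Re(g·a) + 1) − ln w` equals `1 − R`, where
`R = ln(1 + |a|²/(T − |a|²))`; moreover it is attained at `g* = conj(a)/T` and
`w* = T/(T − |a|²)`. -/
theorem rate_wmmse_relationship (a : ℂ) (T : ℝ) (hT : 0 < T) (ha : ‖a‖ ^ 2 < T) :
    IsLeast {x : ℝ | ∃ w : ℝ, 0 < w ∧ ∃ g : ℂ,
        x = w * (‖g‖ ^ 2 * T - 2 * (g * a).re + 1) - Real.log w}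
      (1 - Real.log (1 + ‖a‖ ^ 2 / (T - ‖a‖ ^ 2))) ∧
    (T / (T - ‖a‖ ^ 2)) *
        (‖(starRingEnd ℂ a / (T : ℂ))‖ ^ 2 * T - 2 * ((starRingEnd ℂ a / (T : ℂ)) * a).re + 1)
        - Real.log (T / (T - ‖a‖ ^ 2))
      = 1 - Real.log (1 + ‖a‖ ^ 2 / (T - ‖a‖ ^ 2)) := by
  have hgap : 0 < T - ‖a‖ ^ 2 := sub_pos.2 ha
  have hmse : 0 < (T - ‖a‖ ^ 2) / T := div_pos hgap hT
  have hrate : 1 - log (1 + ‖a‖ ^ 2 / (T - ‖a‖ ^ 2)) = 1 + log ((T - ‖a‖ ^ 2) / T) := by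
    rw [one_add_div hgap.ne', sub_add_cancel, ← inv_div, log_inv, sub_neg_eq_add]
  have hopt : T / (T - ‖a‖ ^ 2) * (‖starRingEnd ℂ a / T‖ ^ 2 * T
      - 2 * (starRingEnd ℂ a / T * a).re + 1) - log (T / (T - ‖a‖ ^ 2))
      = 1 - log (1 + ‖a‖ ^ 2 / (T - ‖a‖ ^ 2)) := by
    rw [mse_conj_div a hT.ne', hrate, ← inv_div, inv_mul_cancel₀ hmse.ne', log_inv, sub_neg_eq_add]
  refine ⟨⟨⟨_, div_pos hT hgap, _, hopt.symm⟩, ?_⟩, hopt⟩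
  rintro x ⟨w, hw, g, rfl⟩
  rw [hrate]
  calc 1 + log ((T - ‖a‖ ^ 2) / T) ≤ w * ((T - ‖a‖ ^ 2) / T) - log w :=
        one_add_log_le_mul_sub_log hmse hw
    _ ≤ w * (‖g‖ ^ 2 * T - 2 * (g * a).re + 1) - log w := by
        gcongr
        exact sub_sq_norm_div_le_mse a g hT
end
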